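/- arXiv:1801.04642 — 4 statements merged into one kernel-verified Lean document; each statement's English description precedes it below -/
import Mathlib

section
/- Let n, N_p, N_c, r_p, r_c > 0 and 0 < η < 1 with η < 1 - N_c/(n·N_p). Define G(α) piecewise on [0,1] by G(α) = α·η·n²·N_p·(r_p+r_c) for 0 ≤ α < N_c/(N_c + η·n·N_p), and G(α) = η·n·(r_p+r_c)·(α·((1-η)·n·N_p - N_c) + N_c) for N_c/(N_c + η·n·N_p) ≤ α ≤ 1. Then G attains its maximum on [0,1] at α = 1, with maximum value η·(1-η)·n²·N_p·(r_p+r_c). -/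
/-!
Both pieces of `G` are affine in `α` with nonnegative slope, so each is bounded by its value at
the right end of its range. The right piece ends at `α = 1`. The left piece equals
`η n (r_p + r_c) · α n N_p`, and its range ends at the threshold `N_c / (N_c + η n N_p)`, which is
at most `1 - η` precisely because `N_c ≤ (1 - η) n N_p`; at `α = 1 - η` it takes the value `G 1`.
-/

lemma div_add_mul_le_one_sub {Nc m η : ℝ} (hNc : 0 ≤ Nc) (hm : 0 < m) (hη : 0 < η)
    (h : Nc ≤ (1 - η) * m) : Nc / (Nc + η * m) ≤ 1 - η := by
  rw [div_le_iff₀ (by positivity)]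
  nlinarith [mul_le_mul_of_nonneg_left h hη.le]

theorem stmt_0_general (n Np Nc rp rc η : ℝ)
    (hn : 0 < n) (hNp : 0 < Np) (hNc : 0 < Nc) (hrp : 0 < rp) (hrc : 0 < rc)
    (hη0 : 0 < η)
    (hcase : η < 1 - Nc / (n * Np))
    (G : ℝ → ℝ)
    (hG : ∀ α, G α =
      if α < Nc / (Nc + η * n * Np) then
        α * η * n ^ 2 * Np * (rp + rc)
      else
        η * n * (rp + rc) * (α * ((1 - η) * n * Np - Nc) + Nc)) :
    (∀ α ∈ Set.Icc (0 : ℝ) 1, G α ≤ G 1) ∧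
      G 1 = η * (1 - η) * n ^ 2 * Np * (rp + rc) := by
  have hm : 0 < n * Np := mul_pos hn hNp
  have hsurplus : Nc ≤ (1 - η) * (n * Np) :=
    ((div_lt_iff₀ hm).1 (lt_sub_comm.1 hcase)).le
  have hthreshold : Nc / (Nc + η * n * Np) ≤ 1 - η := by
    simpa only [mul_assoc] using div_add_mul_le_one_sub hNc.le hm hη0 hsurplus
  have hG1 : G 1 = η * (1 - η) * n ^ 2 * Np * (rp + rc) := by
    rw [hG, if_neg (by linarith)]
    ring
  refine ⟨fun α hα => ?_, hG1⟩
  rw [hG1, hG]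
  split_ifs with hlow
  · calc α * η * n ^ 2 * Np * (rp + rc) = η * n * (rp + rc) * (n * Np) * α := by ring
      _ ≤ η * n * (rp + rc) * (n * Np) * (1 - η) := by gcongr; linarith
      _ = η * (1 - η) * n ^ 2 * Np * (rp + rc) := by ring
  · calc η * n * (rp + rc) * (α * ((1 - η) * n * Np - Nc) + Nc)
        ≤ η * n * (rp + rc) * (1 * ((1 - η) * n * Np - Nc) + Nc) := by
          gcongr
          · linarith
          · exact hα.2
      _ = η * (1 - η) * n ^ 2 * Np * (rp + rc) := by ring

theorem stmt_0 (n Np Nc rp rc η : ℝ)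
    (hn : 0 < n) (hNp : 0 < Np) (hNc : 0 < Nc) (hrp : 0 < rp) (hrc : 0 < rc)
    (hη0 : 0 < η) (hη1 : η < 1)
    (hcase : η < 1 - Nc / (n * Np))
    (G : ℝ → ℝ)
    (hG : ∀ α, G α =
      if α < Nc / (Nc + η * n * Np) then
        α * η * n ^ 2 * Np * (rp + rc)
      else
        η * n * (rp + rc) * (α * ((1 - η) * n * Np - Nc) + Nc)) :
    (∀ α ∈ Set.Icc (0 : ℝ) 1, G α ≤ G 1) ∧
      G 1 = η * (1 - η) * n ^ 2 * Np * (rp + rc) :=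
  stmt_0_general n Np Nc rp rc η hn hNp hNc hrp hrc hη0 hcase G hG
end

section
/- Let n, N_p, N_c, r_p, r_c > 0 and 0 < η < 1 with η ≥ 1 - N_c/(n·N_p). Define G(α) piecewise on [0,1] by G(α) = α·η·n²·N_p·(r_p+r_c) for 0 ≤ α < N_c/(N_c + η·n·N_p), and G(α) = η·n·(r_p+r_c)·(α·((1-η)·n·N_p - N_c) + N_c) for N_c/(N_c + η·n·N_p) ≤ α ≤ 1. Then G attains its maximum on [0,1] at α* = N_c/(N_c + η·n·N_p), with maximum value η·n²·N_c·N_p·(r_p+r_c)/(N_c + η·n·N_p). -/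
/-
G is piecewise linear: its first piece has slope η n² N_p (r_p + r_c) ≥ 0, and the hypothesis
η ≥ 1 - N_c / (n N_p) makes the slope (1 - η) n N_p - N_c of the second piece non-positive. The two
pieces agree at the break point α*, so G increases up to α* and does not increase afterwards.
-/

open Set

theorem ite_lt_le_of_monotoneOn_of_antitoneOn {α β : Type*} [LinearOrder α] [Preorder β]
    {f g : α → β} {a : α} (hf : MonotoneOn f (Iic a)) (hg : AntitoneOn g (Ici a))
    (hfg : f a ≤ g a) (x : α) : (if x < a then f x else g x) ≤ g a := by
  split_ifs with hx
  · exact (hf (mem_Iic.2 hx.le) self_mem_Iic hx.le).trans hfg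
  · have hax : a ≤ x := not_lt.1 hx
    exact hg self_mem_Ici hax hax

theorem stmt_1_general (n Np Nc rp rc η : ℝ)
    (hn : 0 < n) (hNp : 0 < Np) (hNc : 0 < Nc) (hrp : 0 < rp) (hrc : 0 < rc)
    (hη0 : 0 < η)
    (hcase : η ≥ 1 - Nc / (n * Np))
    (G : ℝ → ℝ)
    (hG : ∀ α, G α =
      if α < Nc / (Nc + η * n * Np) then
        α * η * n ^ 2 * Np * (rp + rc)
      else
        η * n * (rp + rc) * (α * ((1 - η) * n * Np - Nc) + Nc)) :
    (∀ α ∈ Set.Icc (0 : ℝ) 1, G α ≤ G (Nc / (Nc + η * n * Np))) ∧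
      G (Nc / (Nc + η * n * Np)) =
        η * n ^ 2 * Nc * Np * (rp + rc) / (Nc + η * n * Np) := by
  set a := Nc / (Nc + η * n * Np) with ha
  have hden : 0 < Nc + η * n * Np := by positivity
  have hslope : (1 - η) * n * Np - Nc ≤ 0 := by
    have := (le_div_iff₀ (by positivity : 0 < n * Np)).1 (show 1 - η ≤ Nc / (n * Np) by linarith)
    linarith
  have hGa : G a = η * n * (rp + rc) * (a * ((1 - η) * n * Np - Nc) + Nc) := by
    rw [hG, if_neg (lt_irrefl a)]
  have hmeet : a * η * n ^ 2 * Np * (rp + rc) = G a := by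
    rw [hGa, ha]
    field_simp
    ring
  refine ⟨fun α _ => ?_, by rw [← hmeet, ha]; field_simp⟩
  rw [hG, hGa]
  apply ite_lt_le_of_monotoneOn_of_antitoneOn
  · exact fun x _ y _ hxy => by gcongr
  · exact fun x _ y _ hxy => by gcongr _ * (?_ + _); exact mul_le_mul_of_nonpos_right hxy hslope
  · exact (hmeet.trans hGa).le

theorem stmt_1 (n Np Nc rp rc η : ℝ)
    (hn : 0 < n) (hNp : 0 < Np) (hNc : 0 < Nc) (hrp : 0 < rp) (hrc : 0 < rc)
    (hη0 : 0 < η) (hη1 : η < 1)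
    (hcase : η ≥ 1 - Nc / (n * Np))
    (G : ℝ → ℝ)
    (hG : ∀ α, G α =
      if α < Nc / (Nc + η * n * Np) then
        α * η * n ^ 2 * Np * (rp + rc)
      else
        η * n * (rp + rc) * (α * ((1 - η) * n * Np - Nc) + Nc)) :
    (∀ α ∈ Set.Icc (0 : ℝ) 1, G α ≤ G (Nc / (Nc + η * n * Np))) ∧
      G (Nc / (Nc + η * n * Np)) =
        η * n ^ 2 * Nc * Np * (rp + rc) / (Nc + η * n * Np) :=
  stmt_1_general n Np Nc rp rc η hn hNp hNc hrp hrc hη0 hcase G hG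
end

section
/- Let n, N_p, N_c, r_p, r_c > 0, 0 < η ≤ 1, with η·n·N_p ≥ N_c and η > 1 - N_c/(n·N_p). The welfare function R(α) = (r_p+r_c)·(α·(N_p·η·(1-η)·n² - N_c·η·n) + N_c·η·n) is strictly decreasing in α, and on the feasible interval [N_c/(N_c+η·n·N_p), 1] it is maximized at α* = N_c/(N_c + η·n·N_p), where total production α*·η·n·N_p equals (1-α*)·N_c, yielding maximum welfare η·n²·N_c·N_p·(r_p+r_c)/(N_c + η·n·N_p). -/
/-!
The welfare is affine in `α` with slope `(r_p + r_c) · η n (N_p n (1 - η) - N_c)`, and the case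
hypothesis `η > 1 - N_c / (n N_p)` says exactly that `N_p n (1 - η) < N_c`, so the slope is
negative. Hence the optimum on the feasible interval is its left endpoint `α*`, where supply
`α* η n N_p` meets demand `(1 - α*) N_c`; evaluating the affine function there gives the value.
-/

lemma strictAnti_const_mul_affine {c s b : ℝ} (hc : 0 < c) (hs : s < 0) :
    StrictAnti fun α : ℝ => c * (α * s + b) := fun _ _ hab => by
  nlinarith [mul_pos hc (mul_pos (sub_pos.mpr hab) (neg_pos.mpr hs))]

lemma welfare_slope_neg {n Np Nc η : ℝ} (hn : 0 < n) (hNp : 0 < Np) (hη0 : 0 < η)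
    (hcase : η > 1 - Nc / (n * Np)) :
    Np * η * (1 - η) * n ^ 2 - Nc * η * n < 0 := by
  have hnp : 0 < n * Np := mul_pos hn hNp
  have hdeficit : (1 - η) * (n * Np) < Nc := (lt_div_iff₀ hnp).mp (by linarith)
  have : Np * η * (1 - η) * n ^ 2 - Nc * η * n = η * n * ((1 - η) * (n * Np) - Nc) := by ring
  rw [this]
  exact mul_neg_of_pos_of_neg (mul_pos hη0 hn) (by linarith)

theorem stmt_5_general (n Np Nc rp rc η : ℝ)
    (hn : 0 < n) (hNp : 0 < Np) (hNc : 0 < Nc) (hrp : 0 < rp) (hrc : 0 < rc)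
    (hη0 : 0 < η)
    (hcase : η > 1 - Nc / (n * Np))
    (R : ℝ → ℝ)
    (hR : ∀ α, R α = (rp + rc) * (α * (Np * η * (1 - η) * n ^ 2 - Nc * η * n) + Nc * η * n)) :
    StrictAnti R ∧
    (∀ α ∈ Set.Icc (Nc / (Nc + η * n * Np)) 1, R α ≤ R (Nc / (Nc + η * n * Np))) ∧
    (Nc / (Nc + η * n * Np)) * η * n * Np = (1 - Nc / (Nc + η * n * Np)) * Nc ∧
    R (Nc / (Nc + η * n * Np)) = η * n ^ 2 * Nc * Np * (rp + rc) / (Nc + η * n * Np) := by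
  have hR_anti : StrictAnti R := by
    rw [show R = _ from funext hR]
    exact strictAnti_const_mul_affine (add_pos hrp hrc) (welfare_slope_neg hn hNp hη0 hcase)
  have hden : Nc + η * n * Np ≠ 0 := by positivity
  refine ⟨hR_anti, fun α hα => hR_anti.antitone hα.1, ?_, ?_⟩
  · field_simp
    ring
  · rw [hR]
    field_simp
    ring

theorem stmt_5 (n Np Nc rp rc η : ℝ)
    (hn : 0 < n) (hNp : 0 < Np) (hNc : 0 < Nc) (hrp : 0 < rp) (hrc : 0 < rc)
    (hη0 : 0 < η) (hη1 : η ≤ 1)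
    (hsupply : η * n * Np ≥ Nc)
    (hcase : η > 1 - Nc / (n * Np))
    (R : ℝ → ℝ)
    (hR : ∀ α, R α = (rp + rc) * (α * (Np * η * (1 - η) * n ^ 2 - Nc * η * n) + Nc * η * n)) :
    StrictAnti R ∧
    (∀ α ∈ Set.Icc (Nc / (Nc + η * n * Np)) 1, R α ≤ R (Nc / (Nc + η * n * Np))) ∧
    (Nc / (Nc + η * n * Np)) * η * n * Np = (1 - Nc / (Nc + η * n * Np)) * Nc ∧
    R (Nc / (Nc + η * n * Np)) = η * n ^ 2 * Nc * Np * (rp + rc) / (Nc + η * n * Np) :=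
  stmt_5_general n Np Nc rp rc η hn hNp hNc hrp hrc hη0 hcase R hR
end

section
/- Let n, N_p, N_c, r_p, r_c > 0, 0 < η ≤ 1, and set K = (N_p·r_p)/(N_c·r_c) and α* = N_c/(N_c + η·n·N_p). For all δ > 0 with α* + δ ≤ 1, the inequality K·(α*·η²·n²·(α*+δ)/(α*·η·n + δ) - α*·η·n) < δ holds if and only if δ > α*·η·n·(K·η·n - K - 1). In particular, this inequality holds for all δ > 0 if and only if η ≤ N_c·r_c/(n·N_p·r_p) + 1/n. -/
/-!
Write `m = η n` and `A = α m`. The dilution term simplifies to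
`α m² (α + δ) / (A + δ) - A = A (m - 1) δ / (A + δ)`, so the deviation inequality is
`K A (m - 1) δ / (A + δ) < δ`, i.e. `K A (m - 1) < A + δ` after cancelling `δ > 0`. This is a
lower bound on `δ`, which holds for every `δ > 0` exactly when the bound `A (K m - K - 1)` is
nonpositive, i.e. when `K m ≤ K + 1`.
-/

lemma dilution_sub_eq {α η n δ : ℝ} (h : α * η * n + δ ≠ 0) :
    α * η ^ 2 * n ^ 2 * (α + δ) / (α * η * n + δ) - α * η * n
      = α * η * n * (η * n - 1) * δ / (α * η * n + δ) := by
  field_simp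
  ring

lemma mul_div_add_lt_self_iff {a c δ : ℝ} (ha : 0 < a) (hδ : 0 < δ) :
    c * δ / (a + δ) < δ ↔ c - a < δ := by
  rw [div_lt_iff₀ (by positivity), mul_comm δ, mul_lt_mul_iff_of_pos_right hδ,
    sub_lt_iff_lt_add']

lemma dilution_deviation_lt_iff {K α η n δ : ℝ} (hA : 0 < α * η * n) (hδ : 0 < δ) :
    K * (α * η ^ 2 * n ^ 2 * (α + δ) / (α * η * n + δ) - α * η * n) < δ ↔
      δ > α * η * n * (K * η * n - K - 1) := by
  rw [dilution_sub_eq (by positivity), mul_div_assoc', ← mul_assoc,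
    mul_div_add_lt_self_iff hA hδ, gt_iff_lt]
  ring_nf

lemma mul_sub_sub_one_nonpos_iff {K η n : ℝ} (hK : 0 < K) (hn : 0 < n) :
    K * η * n - K - 1 ≤ 0 ↔ η ≤ (K + 1) / (K * n) := by
  rw [le_div_iff₀ (by positivity)]
  constructor <;> intro <;> linarith

theorem stmt_9_general (n Np Nc rp rc η : ℝ)
    (hn : 0 < n) (hNp : 0 < Np) (hNc : 0 < Nc) (hrp : 0 < rp) (hrc : 0 < rc)
    (hη0 : 0 < η)
    (K : ℝ) (hK : K = (Np * rp) / (Nc * rc))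
    (α : ℝ) (hα : α = Nc / (Nc + η * n * Np)) :
    (∀ δ : ℝ, 0 < δ → α + δ ≤ 1 →
      (K * (α * η ^ 2 * n ^ 2 * (α + δ) / (α * η * n + δ) - α * η * n) < δ ↔
        δ > α * η * n * (K * η * n - K - 1))) ∧
    ((∀ δ : ℝ, 0 < δ →
        K * (α * η ^ 2 * n ^ 2 * (α + δ) / (α * η * n + δ) - α * η * n) < δ) ↔
      η ≤ Nc * rc / (n * Np * rp) + 1 / n) := by
  have hK0 : 0 < K := by rw [hK]; positivity
  have hA : 0 < α * η * n := by rw [hα]; positivity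
  have threshold_eq : Nc * rc / (n * Np * rp) + 1 / n = (K + 1) / (K * n) := by
    rw [hK]; field_simp; ring
  refine ⟨fun δ hδ _ ↦ dilution_deviation_lt_iff hA hδ, ?_⟩
  rw [threshold_eq, ← mul_sub_sub_one_nonpos_iff hK0 hn, ← not_lt, ← mul_pos_iff_of_pos_left hA,
    not_lt, ← forall_gt_iff_le]
  exact forall₂_congr fun δ hδ ↦ dilution_deviation_lt_iff hA hδ

theorem stmt_9 (n Np Nc rp rc η : ℝ)
    (hn : 0 < n) (hNp : 0 < Np) (hNc : 0 < Nc) (hrp : 0 < rp) (hrc : 0 < rc)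
    (hη0 : 0 < η) (hη1 : η ≤ 1) (hηn : 1 < η * n)
    (K : ℝ) (hK : K = (Np * rp) / (Nc * rc))
    (α : ℝ) (hα : α = Nc / (Nc + η * n * Np)) :
    (∀ δ : ℝ, 0 < δ → α + δ ≤ 1 →
      (K * (α * η ^ 2 * n ^ 2 * (α + δ) / (α * η * n + δ) - α * η * n) < δ ↔
        δ > α * η * n * (K * η * n - K - 1))) ∧
    ((∀ δ : ℝ, 0 < δ →
        K * (α * η ^ 2 * n ^ 2 * (α + δ) / (α * η * n + δ) - α * η * n) < δ) ↔
      η ≤ Nc * rc / (n * Np * rp) + 1 / n) :=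
  stmt_9_general n Np Nc rp rc η hn hNp hNc hrp hrc hη0 K hK α hα
end
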